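/- arXiv:math/0608137 — 4 statements merged into one kernel-verified Lean document; each statement's English description precedes it below -/
import Mathlib

section
/- All generating systems of cardinality n of a free group of rank n are Nielsen equivalent; equivalently, every surjective group homomorphism f : Fₙ → Fₙ from the free group of rank n to itself is injective, hence an automorphism. -/
set_option maxHeartbeats 1000000

open FreeGroup Function

section Aux
variable {α : Type*} [DecidableEq α]

private lemma reduced_no_adj {L : List (α × Bool)} (h : FreeGroup.reduce L = L)
    {j : ℕ} (hj : j + 1 < L.length) {x : α} {b : Bool}
    (h1 : L[j] = (x, b)) (h2 : L[j+1] = (x, !b)) : False := by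
  apply @FreeGroup.reduce.not α _ False L (L.take j) (L.drop (j+2)) x b
  rw [h]
  conv_lhs => rw [← List.take_append_drop j L]
  congr 1
  rw [List.drop_eq_getElem_cons (by omega), h1]
  congr 1
  rw [List.drop_eq_getElem_cons hj, h2]

private lemma myadj {L : List (α × Bool)} (hL : FreeGroup.reduce L = L) {i i' : Fin L.length}
    (hii : (i : ℕ) + 1 = (i' : ℕ)) (hc : (L.get i).1 = (L.get i').1)
    (hb : (L.get i).2 ≠ (L.get i').2) : False := by
  have h2 : (L.get i').2 = !(L.get i).2 := by
    cases hx : (L.get i).2 <;> cases hy : (L.get i').2 <;> simp_all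
  obtain ⟨i', hlt'⟩ := i'
  simp only [Fin.val_mk] at hii
  subst hii
  refine reduced_no_adj hL (j := (i : ℕ)) (by omega) (x := (L.get i).1) (b := (L.get i).2) ?_ ?_
  · simp [List.get_eq_getElem]
  · rw [← h2, hc]
    simp [List.get_eq_getElem]

/-- the partial permutation data -/
private def ww (L : List (α × Bool)) (t : Bool) (i : Fin L.length) : Fin (L.length + 1) :=
  if (L.get i).2 = t then i.succ else i.castSucc

private lemma ww_inj {L : List (α × Bool)} (hL : FreeGroup.reduce L = L) (t : Bool) {c : α}
    {i i' : Fin L.length} (hi : (L.get i).1 = c) (hi' : (L.get i').1 = c)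
    (h : ww L t i = ww L t i') : i = i' := by
  unfold ww at h
  by_cases b1 : (L.get i).2 = t <;> by_cases b2 : (L.get i').2 = t <;>
      simp only [b1, b2, if_pos, if_neg, if_true, if_false] at h
  · exact Fin.succ_inj.mp h
  · exfalso
    have hii : (i : ℕ) + 1 = (i' : ℕ) := by
      have := congrArg Fin.val h; simpa using this
    exact myadj hL hii (hi.trans hi'.symm) (by rw [b1]; exact fun hh => b2 hh.symm)
  · exfalso
    have hii : (i' : ℕ) + 1 = (i : ℕ) := by
      have := congrArg Fin.val h; simpa using this.symm
    exact myadj hL hii (hi'.trans hi.symm) (by rw [b2]; exact fun hh => b1 hh.symm)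
  · exact Fin.castSucc_inj.mp h

private lemma exists_perm (L : List (α × Bool)) (hL : FreeGroup.reduce L = L) (c : α) :
    ∃ σ : Equiv.Perm (Fin (L.length + 1)), ∀ i : Fin L.length,
      (L.get i).1 = c → σ (ww L true i) = ww L false i := by
  classical
  set γ := {i : Fin L.length // (L.get i).1 = c} with hγ
  set s : Set (Fin (L.length + 1)) := Set.range (fun j : γ => ww L true j.1) with hs
  set f : Fin (L.length + 1) → Fin (L.length + 1) := fun x =>
    if h : ∃ j : γ, ww L true j.1 = x then ww L false h.choose.1 else x with hf
  have hfs : ∀ j : γ, f (ww L true j.1) = ww L false j.1 := by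
    intro j
    have hex : ∃ j' : γ, ww L true j'.1 = ww L true j.1 := ⟨j, rfl⟩
    have hch : hex.choose = j := by
      have := hex.choose_spec
      exact Subtype.ext (ww_inj hL true hex.choose.2 j.2 this)
    simp only [hf, dif_pos hex, hch]
  have hinj : Set.InjOn f s := by
    rintro x ⟨j, rfl⟩ x' ⟨j', rfl⟩ hxy
    rw [hfs, hfs] at hxy
    rw [Subtype.ext (ww_inj hL false j.2 j'.2 hxy)]
  have hmaps : Set.MapsTo f s (Finset.univ : Finset (Fin (L.length + 1))) := by
    intro x _; simp
  obtain ⟨g0, hg0⟩ := hmaps.exists_equiv_extend_of_card_eq (by simp) hinj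
  refine ⟨g0.trans (Equiv.subtypeUnivEquiv fun x => Finset.mem_univ x), ?_⟩
  intro i hi
  have hmem : ww L true i ∈ s := ⟨⟨i, hi⟩, rfl⟩
  have := hg0 _ hmem
  calc (g0.trans (Equiv.subtypeUnivEquiv fun x => Finset.mem_univ x)) (ww L true i)
      = (g0 (ww L true i) : Fin (L.length + 1)) := rfl
    _ = f (ww L true i) := this
    _ = ww L false i := hfs ⟨i, hi⟩

private lemma prod_eval {X : Type*} (gs : List (Equiv.Perm X)) :
    ∀ p : ℕ → X, (∀ j (hj : j < gs.length), (gs[j]'hj) (p (j+1)) = p j) →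
    gs.prod (p gs.length) = p 0 := by
  induction gs with
  | nil => simp
  | cons g gs ih =>
    intro p h
    have h0 := h 0 (by simp)
    simp only [List.length_cons, List.prod_cons, Equiv.Perm.mul_apply]
    have := ih (fun j => p (j+1)) (fun j hj => h (j+1) (by simp; omega))
    rw [this]
    simpa using h0

/-- residual finiteness of free groups, in the quantitative form we need -/
private lemma exists_perm_hom (g : FreeGroup α) (hg : g ≠ 1) :
    ∃ (k : ℕ) (φ : FreeGroup α →* Equiv.Perm (Fin (k + 1))), φ g ≠ 1 := by
  classical
  have hL : FreeGroup.reduce g.toWord = g.toWord := reduce_toWord g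
  set L := g.toWord with hLdef
  have hk : L.length ≠ 0 := by
    intro h
    exact hg (toWord_eq_nil_iff.mp (List.length_eq_zero_iff.mp h))
  choose σ hσ using fun c => exists_perm L hL c
  refine ⟨L.length, FreeGroup.lift σ, ?_⟩
  set p : ℕ → Fin (L.length + 1) := fun j => ⟨min j L.length, by omega⟩ with hp
  have key : (FreeGroup.lift σ g) (p L.length) = p 0 := by
    have hg' : g = FreeGroup.mk L := mk_toWord.symm
    rw [hg', FreeGroup.lift_mk]
    set gs : List (Equiv.Perm (Fin (L.length + 1))) :=
      L.map fun x => cond x.2 (σ x.1) (σ x.1)⁻¹ with hgs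
    have hlen : gs.length = L.length := List.length_map _
    have cond : ∀ j (hj : j < gs.length), (gs[j]'hj) (p (j+1)) = p j := by
      intro j hj
      have hjL : j < L.length := by rwa [hlen] at hj
      have hget : gs[j]'hj = cond (L[j]'hjL).2 (σ (L[j]'hjL).1) (σ (L[j]'hjL).1)⁻¹ := by
        simp [hgs]
      have hpj : p j = (⟨j, by omega⟩ : Fin (L.length + 1)) := by
        simp only [hp]; congr 1; omega
      have hpj1 : p (j+1) = (⟨j+1, by omega⟩ : Fin (L.length + 1)) := by
        simp only [hp]; congr 1; omega
      have hσj := hσ (L[j]'hjL).1 ⟨j, hjL⟩ (by rw [List.get_eq_getElem])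
      rw [hget, hpj, hpj1]
      rcases hb : (L[j]'hjL).2 with _ | _
      · -- letter (c, false): σ c maps j ↦ j+1, we apply inverse
        simp only [cond_false]
        unfold ww at hσj
        rw [List.get_eq_getElem, hb] at hσj
        simp only [Bool.false_eq_true, if_neg, if_pos, reduceIte] at hσj
        have h1 : (⟨j, hjL⟩ : Fin L.length).castSucc = (⟨j, by omega⟩ : Fin (L.length + 1)) := rfl
        have h2 : (⟨j, hjL⟩ : Fin L.length).succ = (⟨j+1, by omega⟩ : Fin (L.length + 1)) := rfl
        rw [h1, h2] at hσj
        rw [← hσj]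
        exact (σ (L[j]'hjL).1).symm_apply_apply _
      · -- letter (c, true): σ c maps j+1 ↦ j
        simp only [cond_true]
        unfold ww at hσj
        rw [List.get_eq_getElem, hb] at hσj
        simp only [reduceIte, Bool.true_eq_false] at hσj
        have h1 : (⟨j, hjL⟩ : Fin L.length).castSucc = (⟨j, by omega⟩ : Fin (L.length + 1)) := rfl
        have h2 : (⟨j, hjL⟩ : Fin L.length).succ = (⟨j+1, by omega⟩ : Fin (L.length + 1)) := rfl
        rw [h1, h2] at hσj
        simpa using hσj
    have := prod_eval gs p cond
    rwa [hlen] at this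
  intro hone
  rw [hone] at key
  simp only [Equiv.Perm.coe_one, id_eq] at key
  have : min L.length L.length = min 0 L.length := congrArg Fin.val key
  omega

end Aux

/-- Malcev's argument: free groups of finite rank are Hopfian. -/
private lemma free_group_hopfian (n : ℕ) (f : FreeGroup (Fin n) →* FreeGroup (Fin n))
    (hf : Function.Surjective f) : Function.Injective f := by
  rw [injective_iff_map_eq_one]
  intro g hg1
  by_contra hg
  obtain ⟨k, φ, hφ⟩ := exists_perm_hom g hg
  set Q := Equiv.Perm (Fin (k + 1))
  set Φ : (Fin n → Q) → (Fin n → Q) := fun d i => (FreeGroup.lift d) (f (FreeGroup.of i))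
    with hΦ
  have hΦinj : Function.Injective Φ := by
    intro d d' h
    have h1 : (FreeGroup.lift d).comp f = (FreeGroup.lift d').comp f :=
      FreeGroup.ext_hom _ _ fun a => congrFun h a
    have h2 : (FreeGroup.lift d : FreeGroup (Fin n) →* Q) = FreeGroup.lift d' :=
      MonoidHom.ext fun y => by
        obtain ⟨x, rfl⟩ := hf y
        exact DFunLike.congr_fun h1 x
    funext i
    calc d i = FreeGroup.lift d (FreeGroup.of i) := (FreeGroup.lift_apply_of).symm
      _ = FreeGroup.lift d' (FreeGroup.of i) := by rw [h2]
      _ = d' i := FreeGroup.lift_apply_of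
  obtain ⟨d, hd⟩ := Finite.injective_iff_surjective.mp hΦinj fun i => φ (FreeGroup.of i)
  have hcomp : (FreeGroup.lift d).comp f = φ :=
    FreeGroup.ext_hom _ _ fun a => congrFun hd a
  have : φ g = 1 := by
    rw [← hcomp, MonoidHom.comp_apply, hg1]
    exact map_one _
  exact hφ this

/-- All generating systems of cardinality `n` of the free group of rank `n` are Nielsen
equivalent; equivalently, every surjective endomorphism of the free group of rank `n`
is injective (hence an automorphism). -/
theorem free_group_surjective_nielsen_equivalent (n : ℕ)
    (βx βy : FreeGroup (Fin n) →* FreeGroup (Fin n))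
    (hβx : Function.Surjective βx) (hβy : Function.Surjective βy) :
    (∃ α : FreeGroup (Fin n) ≃* FreeGroup (Fin n),
        ∀ w : FreeGroup (Fin n), βy w = βx (α w)) ∧
      Function.Injective βx := by
  have hx : Function.Injective βx := free_group_hopfian n βx hβx
  have hy : Function.Injective βy := free_group_hopfian n βy hβy
  refine ⟨⟨(MulEquiv.ofBijective βy ⟨hy, hβy⟩).trans (MulEquiv.ofBijective βx ⟨hx, hβx⟩).symm,
    ?_⟩, hx⟩
  intro w
  have : βx ((MulEquiv.ofBijective βx ⟨hx, hβx⟩).symm (βy w)) = βy w :=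
    (MulEquiv.ofBijective βx ⟨hx, hβx⟩).apply_symm_apply (βy w)
  simp only [MulEquiv.trans_apply]
  exact this.symm
end

section
/- Let F = F(X₁,…,X_g) be the free group of rank g, let G be a group, let φ : F → G be a surjective homomorphism whose kernel is the normal closure of elements R₁,…,R_{g−1} ∈ F, let Φ : ℤ[F] → ℤ[G] be the induced ring homomorphism of integral group rings, and let I ⊆ ℤ[G] be the two-sided ideal generated by the elements Φ(∂R_j/∂X_i) for 1 ≤ i ≤ g, 1 ≤ j ≤ g−1. Then for any two elements w, w' ∈ F with φ(w) = φ(w') (i.e. any two lifts of the same element of G) and any i, the difference Φ(∂w/∂X_i) − Φ(∂w'/∂X_i) lies in I. In particular the images Φ(∂w/∂X_i) are well defined in the quotient ring ℤ[G]/I, independently of the choice of lift. -/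
/-!
Write `δ(u) = Φ(∂u/∂Xᵢ)` and `σ(u) = Φ(u)`. The product rule makes `δ` a crossed homomorphism:
`δ(uv) = δ(u) + σ(u) δ(v)`. Consequently the elements `r` with `σ(r) = 1` and `δ(r) ∈ I` form a
normal subgroup of `F`; it contains the relators, hence the whole kernel of `φ`. If `φ(w) = φ(w')`
then `w = w' r` with `r` in that kernel, and `δ(w) = δ(w') + σ(w') δ(r) ≡ δ(w') mod I`.
-/

def IsCrossedHom {F B : Type*} [Monoid F] [Ring B] (σ : F →* B) (δ : F → B) : Prop :=
  ∀ u v, δ (u * v) = δ u + σ u * δ v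

namespace IsCrossedHom

section Monoid

variable {F B : Type*} [Monoid F] [Ring B] {σ : F →* B} {δ : F → B}

theorem map_one (hδ : IsCrossedHom σ δ) : δ 1 = 0 := by
  have h := hδ 1 1
  rwa [mul_one, σ.map_one, one_mul, left_eq_add] at h

theorem comp_ringHom {C : Type*} [Ring C] (hδ : IsCrossedHom σ δ) (Φ : B →+* C) :
    IsCrossedHom (Φ.toMonoidHom.comp σ) (Φ ∘ δ) := fun u v => by
  rw [Function.comp_apply, hδ, map_add, map_mul]
  rfl

end Monoid

variable {F B : Type*} [Group F] [Ring B] {σ : F →* B} {δ : F → B}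

theorem map_inv (hδ : IsCrossedHom σ δ) (u : F) : δ u⁻¹ = -(σ u⁻¹ * δ u) := by
  have h := hδ u⁻¹ u
  rw [inv_mul_cancel, hδ.map_one] at h
  exact eq_neg_of_add_eq_zero_left h.symm

theorem map_conj_of_map_eq_one (hδ : IsCrossedHom σ δ) {r : F} (hr : σ r = 1) (c : F) :
    δ (c * r * c⁻¹) = σ c * δ r := by
  have hconj : σ (c * r * c⁻¹) = 1 := σ.normal_ker.conj_mem r hr c
  rw [hδ, hδ, hδ.map_inv, mul_neg, ← mul_assoc, ← σ.map_mul, hconj, one_mul]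
  abel

def kerMod (hδ : IsCrossedHom σ δ) (I : TwoSidedIdeal B) : Subgroup F where
  carrier := {r | σ r = 1 ∧ δ r ∈ I}
  one_mem' := ⟨σ.ker.one_mem, hδ.map_one ▸ I.zero_mem⟩
  mul_mem' := by
    rintro a b ⟨hσa, hδa⟩ ⟨hσb, hδb⟩
    refine ⟨σ.ker.mul_mem hσa hσb, ?_⟩
    rw [hδ]
    exact I.add_mem hδa (I.mul_mem_left _ _ hδb)
  inv_mem' := by
    rintro a ⟨hσa, hδa⟩
    refine ⟨σ.ker.inv_mem hσa, ?_⟩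
    rw [hδ.map_inv]
    exact I.neg_mem (I.mul_mem_left _ _ hδa)

instance kerMod_normal (hδ : IsCrossedHom σ δ) (I : TwoSidedIdeal B) : (hδ.kerMod I).Normal where
  conj_mem := by
    rintro r ⟨hσr, hδr⟩ c
    refine ⟨σ.normal_ker.conj_mem r hσr c, ?_⟩
    rw [hδ.map_conj_of_map_eq_one hσr]
    exact I.mul_mem_left _ _ hδr

theorem map_mem_of_mem_normalClosure (hδ : IsCrossedHom σ δ) {I : TwoSidedIdeal B} {S : Set F}
    (hS : ∀ s ∈ S, σ s = 1 ∧ δ s ∈ I) {r : F} (hr : r ∈ Subgroup.normalClosure S) : δ r ∈ I :=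
  (Subgroup.normalClosure_le_normal (N := hδ.kerMod I) hS hr).2

theorem sub_mem_of_inv_mul_mem (hδ : IsCrossedHom σ δ) {I : TwoSidedIdeal B} {w w' : F}
    (h : δ (w'⁻¹ * w) ∈ I) : δ w - δ w' ∈ I := by
  have hw : δ w = δ w' + σ w' * δ (w'⁻¹ * w) := by rw [← hδ, mul_inv_cancel_left]
  rw [hw, add_sub_cancel_left]
  exact I.mul_mem_left _ _ h

end IsCrossedHom

theorem fox_derivative_well_defined_mod_ideal_general
    (g : ℕ) {G : Type*} [Group G]
    (φ : FreeGroup (Fin g) →* G)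
    (Rels : Fin (g - 1) → FreeGroup (Fin g))
    (hker : φ.ker = Subgroup.normalClosure (Set.range Rels))
    -- the Fox derivatives `∂/∂Xᵢ`, as `ℤ`-linear maps on the integral group ring
    (D : Fin g →
      MonoidAlgebra ℤ (FreeGroup (Fin g)) →ₗ[ℤ] MonoidAlgebra ℤ (FreeGroup (Fin g)))
    (hD2 : ∀ (i : Fin g) (u v : FreeGroup (Fin g)),
      D i (MonoidAlgebra.of ℤ (FreeGroup (Fin g)) (u * v)) =
        D i (MonoidAlgebra.of ℤ (FreeGroup (Fin g)) u) +
          MonoidAlgebra.of ℤ (FreeGroup (Fin g)) u *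
            D i (MonoidAlgebra.of ℤ (FreeGroup (Fin g)) v))
    -- the induced ring homomorphism `Φ : ℤ[F] → ℤ[G]`
    (Φ : MonoidAlgebra ℤ (FreeGroup (Fin g)) →+* MonoidAlgebra ℤ G)
    (hΦ : ∀ u : FreeGroup (Fin g),
      Φ (MonoidAlgebra.of ℤ (FreeGroup (Fin g)) u) = MonoidAlgebra.of ℤ G (φ u))
    -- the two-sided ideal generated by the images of the Fox derivatives of the relators
    (I : TwoSidedIdeal (MonoidAlgebra ℤ G))
    (hI : I = TwoSidedIdeal.span
      {x | ∃ (i : Fin g) (j : Fin (g - 1)),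
        x = Φ (D i (MonoidAlgebra.of ℤ (FreeGroup (Fin g)) (Rels j)))})
    (w w' : FreeGroup (Fin g)) (hww' : φ w = φ w') (i : Fin g) :
    Φ (D i (MonoidAlgebra.of ℤ (FreeGroup (Fin g)) w)) -
        Φ (D i (MonoidAlgebra.of ℤ (FreeGroup (Fin g)) w')) ∈ I := by
  set of := MonoidAlgebra.of ℤ (FreeGroup (Fin g))
  have hfox : IsCrossedHom of (fun u => D i (of u)) := hD2 i
  have hδ := hfox.comp_ringHom Φ
  have hrel : ∀ s ∈ Set.range Rels, Φ (of s) = 1 ∧ Φ (D i (of s)) ∈ I := by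
    rintro _ ⟨j, rfl⟩
    have hj : Rels j ∈ φ.ker := hker ▸ Subgroup.subset_normalClosure ⟨j, rfl⟩
    refine ⟨by rw [hΦ, hj, map_one], ?_⟩
    rw [hI]
    exact TwoSidedIdeal.subset_span ⟨i, j, rfl⟩
  have hlift : w'⁻¹ * w ∈ Subgroup.normalClosure (Set.range Rels) := by
    rw [← hker, MonoidHom.mem_ker, map_mul, map_inv, hww', inv_mul_cancel]
  exact hδ.sub_mem_of_inv_mul_mem (hδ.map_mem_of_mem_normalClosure hrel hlift)

/-- Fox derivative well-definedness: if `φ : F(X₁,…,X_g) → G` is a presentation of `G`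
with kernel the normal closure of the relators `R₁,…,R_{g−1}`, and `I ⊆ ℤ[G]` is the
two-sided ideal generated by the images under `Φ : ℤ[F] → ℤ[G]` of the Fox derivatives
of the relators, then for any two lifts `w, w'` of the same element of `G` the images
of their Fox derivatives agree modulo `I`. -/
theorem fox_derivative_well_defined_mod_ideal
    (g : ℕ) {G : Type*} [Group G]
    (φ : FreeGroup (Fin g) →* G) (hφ : Function.Surjective φ)
    (Rels : Fin (g - 1) → FreeGroup (Fin g))
    (hker : φ.ker = Subgroup.normalClosure (Set.range Rels))
    -- the Fox derivatives `∂/∂Xᵢ`, as `ℤ`-linear maps on the integral group ring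
    (D : Fin g →
      MonoidAlgebra ℤ (FreeGroup (Fin g)) →ₗ[ℤ] MonoidAlgebra ℤ (FreeGroup (Fin g)))
    (hD1 : ∀ i j : Fin g,
      D i (MonoidAlgebra.of ℤ (FreeGroup (Fin g)) (FreeGroup.of j)) =
        if j = i then 1 else 0)
    (hD2 : ∀ (i : Fin g) (u v : FreeGroup (Fin g)),
      D i (MonoidAlgebra.of ℤ (FreeGroup (Fin g)) (u * v)) =
        D i (MonoidAlgebra.of ℤ (FreeGroup (Fin g)) u) +
          MonoidAlgebra.of ℤ (FreeGroup (Fin g)) u *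
            D i (MonoidAlgebra.of ℤ (FreeGroup (Fin g)) v))
    -- the induced ring homomorphism `Φ : ℤ[F] → ℤ[G]`
    (Φ : MonoidAlgebra ℤ (FreeGroup (Fin g)) →+* MonoidAlgebra ℤ G)
    (hΦ : ∀ u : FreeGroup (Fin g),
      Φ (MonoidAlgebra.of ℤ (FreeGroup (Fin g)) u) = MonoidAlgebra.of ℤ G (φ u))
    -- the two-sided ideal generated by the images of the Fox derivatives of the relators
    (I : TwoSidedIdeal (MonoidAlgebra ℤ G))
    (hI : I = TwoSidedIdeal.span
      {x | ∃ (i : Fin g) (j : Fin (g - 1)),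
        x = Φ (D i (MonoidAlgebra.of ℤ (FreeGroup (Fin g)) (Rels j)))})
    (w w' : FreeGroup (Fin g)) (hww' : φ w = φ w') (i : Fin g) :
    Φ (D i (MonoidAlgebra.of ℤ (FreeGroup (Fin g)) w)) -
        Φ (D i (MonoidAlgebra.of ℤ (FreeGroup (Fin g)) w')) ∈ I :=
  fox_derivative_well_defined_mod_ideal_general g φ Rels hker D hD2 Φ hΦ I hI w w' hww' i
end

section
/- Let G be a group with a presentation given by a surjective homomorphism φ : F(X₁,…,X_g) → G whose kernel is the normal closure of relators R₁,…,R_{g−1}, let Φ : ℤ[F] → ℤ[G] be the induced ring homomorphism of integral group rings, and let I ⊆ ℤ[G] be the two-sided ideal generated by { Φ(∂R_j/∂X_i) : 1 ≤ i ≤ g, 1 ≤ j ≤ g−1 }. Suppose that for some m ≥ 1 and some nontrivial commutative ring R with unit there is a non-trivial representation σ : ℤ[G]/I → M_m(R), i.e. a unital ring homomorphism from ℤ[G] to the m×m matrix ring over R that vanishes on I. Then rank(G) = g, i.e. the minimal cardinality of a generating set of G equals g. -/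
/-- Lustig–Moriah rank criterion: if `G` has a presentation `φ : F(X₁,…,X_g) → G` with
`g − 1` relators `R₁,…,R_{g−1}`, `I ⊆ ℤ[G]` is the two-sided ideal generated by the
images of the Fox derivatives of the relators, and for some `m ≥ 1` and some nontrivial
commutative ring `R` there is a (necessarily non-trivial, since it is unital) ring
homomorphism `σ : ℤ[G] → M_m(R)` vanishing on `I`, then the rank of `G` (the minimal
cardinality of a generating set of `G`) equals `g`. -/
theorem rank_eq_of_representation_of_fox_ideal
    (g : ℕ) {G : Type*} [Group G]
    (φ : FreeGroup (Fin g) →* G) (hφ : Function.Surjective φ)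
    (Rels : Fin (g - 1) → FreeGroup (Fin g))
    (hker : φ.ker = Subgroup.normalClosure (Set.range Rels))
    -- the Fox derivatives `∂/∂Xᵢ`, as `ℤ`-linear maps on the integral group ring
    (D : Fin g →
      MonoidAlgebra ℤ (FreeGroup (Fin g)) →ₗ[ℤ] MonoidAlgebra ℤ (FreeGroup (Fin g)))
    (hD1 : ∀ i j : Fin g,
      D i (MonoidAlgebra.of ℤ (FreeGroup (Fin g)) (FreeGroup.of j)) =
        if j = i then 1 else 0)
    (hD2 : ∀ (i : Fin g) (u v : FreeGroup (Fin g)),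
      D i (MonoidAlgebra.of ℤ (FreeGroup (Fin g)) (u * v)) =
        D i (MonoidAlgebra.of ℤ (FreeGroup (Fin g)) u) +
          MonoidAlgebra.of ℤ (FreeGroup (Fin g)) u *
            D i (MonoidAlgebra.of ℤ (FreeGroup (Fin g)) v))
    -- the induced ring homomorphism `Φ : ℤ[F] → ℤ[G]`
    (Φ : MonoidAlgebra ℤ (FreeGroup (Fin g)) →+* MonoidAlgebra ℤ G)
    (hΦ : ∀ u : FreeGroup (Fin g),
      Φ (MonoidAlgebra.of ℤ (FreeGroup (Fin g)) u) = MonoidAlgebra.of ℤ G (φ u))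
    -- the two-sided ideal generated by the images of the Fox derivatives of the relators
    (I : TwoSidedIdeal (MonoidAlgebra ℤ G))
    (hI : I = TwoSidedIdeal.span
      {x | ∃ (i : Fin g) (j : Fin (g - 1)),
        x = Φ (D i (MonoidAlgebra.of ℤ (FreeGroup (Fin g)) (Rels j)))})
    -- a representation of `ℤ[G]/I` in `M_m(R)`
    (m : ℕ) (hm : 1 ≤ m) {R : Type*} [CommRing R] [Nontrivial R]
    (σ : MonoidAlgebra ℤ G →+* Matrix (Fin m) (Fin m) R)
    (hσ : ∀ x ∈ I, σ x = 0) :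
    IsLeast {n : ℕ | ∃ S : Finset G, S.card = n ∧ Subgroup.closure (S : Set G) = ⊤} g := by
  classical
  -- abbreviations
  set ρ : FreeGroup (Fin g) → Matrix (Fin m) (Fin m) R :=
    fun w => σ (Φ (MonoidAlgebra.of ℤ (FreeGroup (Fin g)) w)) with hρdef
  set c : FreeGroup (Fin g) → Fin g → Matrix (Fin m) (Fin m) R :=
    fun w i => σ (Φ (D i (MonoidAlgebra.of ℤ (FreeGroup (Fin g)) w))) with hcdef
  have hρ1 : ∀ w, φ w = 1 → ρ w = 1 := by
    intro w hw
    simp only [hρdef, hΦ w, hw, map_one]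
  have hcmul : ∀ u v i, c (u * v) i = c u i + ρ u * c v i := by
    intro u v i
    simp only [hcdef, hρdef]
    rw [hD2 i u v, map_add, map_add, map_mul, map_mul]
  have hc1 : ∀ i, c 1 i = 0 := by
    intro i
    have h := hcmul 1 1 i
    rw [mul_one, hρ1 1 (map_one φ), one_mul] at h
    exact (left_eq_add.mp h)
  have hcinv : ∀ w i, c w⁻¹ i = -(ρ w⁻¹ * c w i) := by
    intro w i
    have h := hcmul w⁻¹ w i
    rw [inv_mul_cancel, hc1 i] at h
    exact eq_neg_of_add_eq_zero_left h.symm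
  have hcrel : ∀ (j : Fin (g - 1)) (i : Fin g), c (Rels j) i = 0 := by
    intro j i
    apply hσ
    rw [hI]
    exact TwoSidedIdeal.subset_span ⟨i, j, rfl⟩
  -- the cocycle vanishes on the kernel of φ
  have hcker : ∀ w, φ w = 1 → ∀ i, c w i = 0 := by
    let N : Subgroup (FreeGroup (Fin g)) :=
      { carrier := {w | φ w = 1 ∧ ∀ i, c w i = 0}
        one_mem' := ⟨map_one φ, hc1⟩
        mul_mem' := by
          rintro u v ⟨hu1, hu2⟩ ⟨hv1, hv2⟩
          refine ⟨by rw [map_mul, hu1, hv1, mul_one], fun i => ?_⟩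
          rw [hcmul u v i, hu2 i, hv2 i, mul_zero, add_zero]
        inv_mem' := by
          rintro u ⟨hu1, hu2⟩
          refine ⟨by rw [map_inv, hu1, inv_one], fun i => ?_⟩
          rw [hcinv u i, hu2 i, mul_zero, neg_zero] }
    haveI hN : N.Normal := by
      constructor
      rintro n ⟨hn1, hn2⟩ w
      refine ⟨by rw [map_mul, map_mul, hn1, mul_one, map_inv, mul_inv_cancel], fun i => ?_⟩
      have h1 : c (w * n * w⁻¹) i = c w i + ρ w * c (n * w⁻¹) i := by
        have h := hcmul w (n * w⁻¹) i
        rw [← mul_assoc] at h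
        exact h
      have h2 : c (n * w⁻¹) i = c w⁻¹ i := by
        rw [hcmul n w⁻¹ i, hn2 i, hρ1 n hn1, one_mul, zero_add]
      have h3 : c w i + ρ w * c w⁻¹ i = 0 := by
        have h := hcmul w w⁻¹ i
        rw [mul_inv_cancel, hc1 i] at h
        exact h.symm
      rw [h1, h2, h3]
    intro w hw
    have hwmem : w ∈ φ.ker := hw
    rw [hker] at hwmem
    have hsub : Set.range Rels ⊆ (N : Set (FreeGroup (Fin g))) := by
      rintro _ ⟨j, rfl⟩
      have hj : φ (Rels j) = 1 := by
        have : Rels j ∈ φ.ker := by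
          rw [hker]
          exact Subgroup.subset_normalClosure ⟨j, rfl⟩
        exact this
      exact ⟨hj, hcrel j⟩
    exact (Subgroup.normalClosure_le_normal hsub hwmem).2
  have hccongr : ∀ u v, φ u = φ v → ∀ i, c u i = c v i := by
    intro u v huv i
    have h1 : φ (v⁻¹ * u) = 1 := by rw [map_mul, map_inv, huv, inv_mul_cancel]
    have h2 : u = v * (v⁻¹ * u) := by group
    rw [h2, hcmul v (v⁻¹ * u) i, hcker _ h1 i, mul_zero, add_zero]
  have hcgen : ∀ i j : Fin g, c (FreeGroup.of i) j = if i = j then 1 else 0 := by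
    intro i j
    simp only [hcdef]
    rw [hD1 j i]
    split_ifs with h
    · rw [map_one, map_one]
    · rw [map_zero, map_zero]
  -- the lower bound
  have lower : ∀ n ∈ {n : ℕ | ∃ S : Finset G, S.card = n ∧
      Subgroup.closure (S : Set G) = ⊤}, g ≤ n := by
    rintro n ⟨S, hScard, hSgen⟩
    choose v hv using hφ
    set T : Set (Fin g → Matrix (Fin m) (Fin m) R) :=
      Set.range (fun p : (Fin m × Fin m) × {x // x ∈ S} =>
        Matrix.single p.1.1 p.1.2 (1 : R) • c (v p.2)) with hT
    set M : Submodule R (Fin g → Matrix (Fin m) (Fin m) R) := Submodule.span R T with hM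
    -- every `A`-multiple of a generator lies in `M`
    have hgenmem : ∀ (a : Matrix (Fin m) (Fin m) R) (s : G), s ∈ S → a • c (v s) ∈ M := by
      intro a s hs
      have hdecomp : a • c (v s) = ∑ k : Fin m, ∑ l : Fin m,
          a k l • (Matrix.single k l (1 : R) • c (v s)) := by
        funext i
        simp only [Pi.smul_apply, Finset.sum_apply, smul_eq_mul]
        calc a * c (v s) i
            = (∑ k : Fin m, ∑ l : Fin m, Matrix.single k l (a k l)) * c (v s) i := by
              rw [← Matrix.matrix_eq_sum_single a]
          _ = ∑ k : Fin m, ∑ l : Fin m, a k l • (Matrix.single k l (1 : R) * c (v s) i) := by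
              rw [Finset.sum_mul]
              refine Finset.sum_congr rfl fun k _ => ?_
              rw [Finset.sum_mul]
              refine Finset.sum_congr rfl fun l _ => ?_
              rw [← smul_mul_assoc, Matrix.smul_single, smul_eq_mul, mul_one]
      rw [hdecomp]
      exact Submodule.sum_mem _ fun k _ => Submodule.sum_mem _ fun l _ =>
        Submodule.smul_mem _ _ (Submodule.subset_span ⟨((k, l), ⟨s, hs⟩), rfl⟩)
    -- `M` is stable under the `A`-action
    have hMsmul : ∀ (a : Matrix (Fin m) (Fin m) R) (x), x ∈ M → a • x ∈ M := by
      intro a x hx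
      induction hx using Submodule.span_induction with
      | mem y hy =>
        obtain ⟨⟨⟨k, l⟩, s⟩, rfl⟩ := hy
        rw [smul_smul]
        exact hgenmem _ _ s.2
      | zero => rw [smul_zero]; exact zero_mem _
      | add y z _ _ hy hz => rw [smul_add]; exact add_mem hy hz
      | smul r y _ hy =>
        rw [smul_comm]
        exact Submodule.smul_mem _ _ hy
    -- the subgroup of elements whose cocycle value lies in `M`
    let H : Subgroup G :=
      { carrier := {x | ∃ w, φ w = x ∧ c w ∈ M}
        one_mem' := ⟨1, map_one φ, by
          have h : c (1 : FreeGroup (Fin g)) = 0 := funext hc1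
          rw [h]; exact zero_mem _⟩
        mul_mem' := by
          rintro x y ⟨u, hu, hcu⟩ ⟨w, hw, hcw⟩
          refine ⟨u * w, by rw [map_mul, hu, hw], ?_⟩
          have h : c (u * w) = c u + ρ u • c w := funext fun i => hcmul u w i
          rw [h]
          exact add_mem hcu (hMsmul _ _ hcw)
        inv_mem' := by
          rintro x ⟨u, hu, hcu⟩
          refine ⟨u⁻¹, by rw [map_inv, hu], ?_⟩
          have h : c u⁻¹ = -(ρ u⁻¹ • c u) := funext fun i => hcinv u i
          rw [h]
          exact neg_mem (hMsmul _ _ hcu) }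
    have hStop : Subgroup.closure (S : Set G) ≤ H := by
      rw [Subgroup.closure_le]
      intro s hs
      refine ⟨v s, hv s, ?_⟩
      have h := hgenmem 1 s hs
      rwa [one_smul] at h
    have hHtop : ∀ x : G, x ∈ H := by
      rw [hSgen] at hStop
      exact fun x => hStop trivial
    -- the standard basis vectors lie in `M`
    have heM : ∀ i : Fin g,
        (fun j => if i = j then (1 : Matrix (Fin m) (Fin m) R) else 0) ∈ M := by
      intro i
      obtain ⟨w, hw, hcw⟩ := hHtop (φ (FreeGroup.of i))
      have h : (fun j => if i = j then (1 : Matrix (Fin m) (Fin m) R) else 0) = c w := by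
        funext j
        rw [← hccongr (FreeGroup.of i) w hw.symm j, hcgen i j]
      rw [h]
      exact hcw
    have hspan : Submodule.span R T = ⊤ := by
      rw [eq_top_iff]
      rintro x -
      have hx : x = ∑ i : Fin g,
          x i • (fun j => if i = j then (1 : Matrix (Fin m) (Fin m) R) else 0) := by
        funext j
        simp only [Finset.sum_apply, Pi.smul_apply, smul_eq_mul, mul_ite, mul_one, mul_zero]
        rw [Finset.sum_ite_eq' Finset.univ j x]
        simp
      rw [hx]
      exact Submodule.sum_mem _ fun i _ => hMsmul _ _ (heM i)
    -- counting via the strong rank condition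
    let b : Module.Basis ((i : Fin g) × (Fin m × Fin m)) R (Fin g → Matrix (Fin m) (Fin m) R) :=
      Pi.basis fun _ => Matrix.stdBasis R (Fin m) (Fin m)
    haveI : Fintype T := Set.fintypeRange _
    have hcardle : Fintype.card ((i : Fin g) × (Fin m × Fin m)) ≤ Fintype.card T :=
      Basis.le_span'' b hspan
    have h1 : Fintype.card ((i : Fin g) × (Fin m × Fin m)) = g * (m * m) := by
      simp [Fintype.card_sigma]
    have h2 : Fintype.card T ≤ n * (m * m) := by
      calc Fintype.card T ≤ Fintype.card ((Fin m × Fin m) × {x // x ∈ S}) :=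
            Fintype.card_range_le _
        _ = n * (m * m) := by
            simp [Fintype.card_coe, hScard]
            ring
    have hmm : 0 < m * m := Nat.mul_pos hm hm
    have : g * (m * m) ≤ n * (m * m) := by
      rw [← h1]
      exact le_trans hcardle h2
    exact Nat.le_of_mul_le_mul_right this hmm
  constructor
  · -- membership: the images of the generators give a generating set of size exactly `g`
    set S0 : Finset G := Finset.image (fun i => φ (FreeGroup.of i)) Finset.univ with hS0
    have hgen0 : Subgroup.closure (S0 : Set G) = ⊤ := by
      rw [hS0, Finset.coe_image, Finset.coe_univ, Set.image_univ]
      have h : Set.range (fun i => φ (FreeGroup.of i)) = φ '' Set.range FreeGroup.of := by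
        rw [← Set.range_comp]; rfl
      rw [h, ← MonoidHom.map_closure, FreeGroup.closure_range_of,
        ← MonoidHom.range_eq_map]
      exact MonoidHom.range_eq_top.mpr hφ
    have hk : S0.card ≤ g := le_trans Finset.card_image_le (by simp)
    have hk2 : g ≤ S0.card := lower _ ⟨S0, rfl, hgen0⟩
    exact ⟨S0, le_antisymm hk hk2, hgen0⟩
  · exact lower
end

section
/- Let G be a group with a presentation given by a surjective homomorphism φ : F(X₁,…,X_g) → G whose kernel is the normal closure of relators R₁,…,R_{g−1}, let Φ : ℤ[F] → ℤ[G] be the induced ring homomorphism of integral group rings, and let I ⊆ ℤ[G] be the two-sided ideal generated by { Φ(∂R_j/∂X_i) }. Let σ : ℤ[G] → M_m(R) be a unital ring homomorphism into the m×m matrices over a commutative ring R with unit, vanishing on I. Let w₁,…,w_g ∈ F be elements such that the generating system (φ(w₁),…,φ(w_g)) of G is Nielsen equivalent to the generating system (φ(X₁),…,φ(X_g)). Then the (gm)×(gm) matrix over R whose (i,j)-th m×m block is σ(Φ(∂w_i/∂X_j)) has determinant a unit of R. -/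
namespace LMaux

noncomputable abbrev Mof (g : ℕ) : FreeGroup (Fin g) →* MonoidAlgebra ℤ (FreeGroup (Fin g)) :=
  MonoidAlgebra.of ℤ (FreeGroup (Fin g))

variable {g : ℕ}

theorem D_one
    (D : Fin g → MonoidAlgebra ℤ (FreeGroup (Fin g)) →ₗ[ℤ] MonoidAlgebra ℤ (FreeGroup (Fin g)))
    (hD2 : ∀ (i : Fin g) (u v : FreeGroup (Fin g)),
      D i (Mof g (u * v)) = D i (Mof g u) + Mof g u * D i (Mof g v))
    (i : Fin g) : D i (Mof g 1) = 0 := by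
  have h := hD2 i 1 1
  rw [mul_one, map_one, one_mul] at h
  exact (left_eq_add.mp h)

theorem D_inv
    (D : Fin g → MonoidAlgebra ℤ (FreeGroup (Fin g)) →ₗ[ℤ] MonoidAlgebra ℤ (FreeGroup (Fin g)))
    (hD2 : ∀ (i : Fin g) (u v : FreeGroup (Fin g)),
      D i (Mof g (u * v)) = D i (Mof g u) + Mof g u * D i (Mof g v))
    (i : Fin g) (u : FreeGroup (Fin g)) :
    D i (Mof g u⁻¹) = -(Mof g u⁻¹ * D i (Mof g u)) := by
  have h := hD2 i u u⁻¹
  rw [mul_inv_cancel, D_one D hD2] at h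
  have h2 : Mof g u⁻¹ * (D i (Mof g u) + Mof g u * D i (Mof g u⁻¹)) = 0 := by
    rw [← h, mul_zero]
  rw [mul_add, ← mul_assoc, ← map_mul, inv_mul_cancel, map_one, one_mul] at h2
  exact eq_neg_of_add_eq_zero_right h2

/-- the ring homomorphism of `ℤ[F]` induced by an endomorphism of `F` -/
noncomputable def indHom (g : ℕ) (β : FreeGroup (Fin g) →* FreeGroup (Fin g)) :
    MonoidAlgebra ℤ (FreeGroup (Fin g)) →ₐ[ℤ] MonoidAlgebra ℤ (FreeGroup (Fin g)) :=
  MonoidAlgebra.lift ℤ (MonoidAlgebra ℤ (FreeGroup (Fin g))) (FreeGroup (Fin g))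
    ((MonoidAlgebra.of ℤ (FreeGroup (Fin g))).comp β)

theorem indHom_of (β : FreeGroup (Fin g) →* FreeGroup (Fin g)) (u : FreeGroup (Fin g)) :
    indHom g β (Mof g u) = Mof g (β u) :=
  MonoidAlgebra.lift_of _ _

theorem chain_rule
    (D : Fin g → MonoidAlgebra ℤ (FreeGroup (Fin g)) →ₗ[ℤ] MonoidAlgebra ℤ (FreeGroup (Fin g)))
    (hD1 : ∀ i j : Fin g, D i (Mof g (FreeGroup.of j)) = if j = i then 1 else 0)
    (hD2 : ∀ (i : Fin g) (u v : FreeGroup (Fin g)),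
      D i (Mof g (u * v)) = D i (Mof g u) + Mof g u * D i (Mof g v))
    (β : FreeGroup (Fin g) →* FreeGroup (Fin g)) (j : Fin g) (u : FreeGroup (Fin g)) :
    D j (Mof g (β u)) =
      ∑ k, indHom g β (D k (Mof g u)) * D j (Mof g (β (FreeGroup.of k))) := by
  induction u using FreeGroup.induction_on with
  | C1 =>
    have h1 : β (1 : FreeGroup (Fin g)) = 1 := map_one β
    rw [h1, D_one D hD2]
    symm
    refine Finset.sum_eq_zero fun k _ => ?_
    rw [D_one D hD2, map_zero, zero_mul]
  | of x =>
    have hp : (pure x : FreeGroup (Fin g)) = FreeGroup.of x := rfl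
    simp only [hD1, apply_ite (indHom g β), map_one, map_zero, ite_mul, one_mul, zero_mul,
      Finset.sum_ite_eq, Finset.mem_univ, if_true]
  | inv_of x ih =>
    have hp : (pure x : FreeGroup (Fin g)) = FreeGroup.of x := rfl
    have h1 : β ((FreeGroup.of x)⁻¹) = (β (FreeGroup.of x))⁻¹ := map_inv β _
    rw [h1, D_inv D hD2, ih, Finset.mul_sum, ← Finset.sum_neg_distrib]
    refine Finset.sum_congr rfl fun k _ => ?_
    rw [D_inv D hD2, map_neg, map_mul (indHom g β), indHom_of, h1, neg_mul, mul_assoc]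
  | mul u v ihu ihv =>
    have h1 : β (u * v) = β u * β v := map_mul β u v
    rw [h1, hD2, ihu, ihv, Finset.mul_sum, ← Finset.sum_add_distrib]
    refine Finset.sum_congr rfl fun k _ => ?_
    rw [hD2, map_add, map_mul (indHom g β), indHom_of, add_mul, mul_assoc]


theorem ker_fox_mem
    {G : Type*} [Group G]
    (φ : FreeGroup (Fin g) →* G)
    (Rels : Fin (g - 1) → FreeGroup (Fin g))
    (hker : φ.ker = Subgroup.normalClosure (Set.range Rels))
    (D : Fin g → MonoidAlgebra ℤ (FreeGroup (Fin g)) →ₗ[ℤ] MonoidAlgebra ℤ (FreeGroup (Fin g)))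
    (hD2 : ∀ (i : Fin g) (u v : FreeGroup (Fin g)),
      D i (Mof g (u * v)) = D i (Mof g u) + Mof g u * D i (Mof g v))
    (Φ : MonoidAlgebra ℤ (FreeGroup (Fin g)) →+* MonoidAlgebra ℤ G)
    (hΦ : ∀ u : FreeGroup (Fin g), Φ (Mof g u) = MonoidAlgebra.of ℤ G (φ u))
    (I : TwoSidedIdeal (MonoidAlgebra ℤ G))
    (hI : ∀ (i : Fin g) (t : Fin (g - 1)), Φ (D i (Mof g (Rels t))) ∈ I)
    {r : FreeGroup (Fin g)} (hr : r ∈ φ.ker) (j : Fin g) :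
    Φ (D j (Mof g r)) ∈ I := by
  rw [hker] at hr
  have hr' : r ∈ Subgroup.closure (Group.conjugatesOfSet (Set.range Rels)) := hr
  clear hr
  induction hr' using Subgroup.closure_induction with
  | mem x hx =>
    obtain ⟨a, ⟨t, rfl⟩, hc⟩ := Group.mem_conjugatesOfSet_iff.mp hx
    obtain ⟨c, rfl⟩ := isConj_iff.mp hc
    have hR1 : φ (Rels t) = 1 := by
      have : Rels t ∈ φ.ker := by
        rw [hker]; exact Subgroup.subset_normalClosure ⟨t, rfl⟩
      exact this
    have hconj1 : φ (c * Rels t * c⁻¹) = 1 := by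
      rw [map_mul, map_mul, map_inv, hR1, mul_one, mul_inv_cancel]
    have e1 : D j (Mof g (c * Rels t * c⁻¹)) =
        D j (Mof g c) + Mof g c * D j (Mof g (Rels t))
          - Mof g (c * Rels t * c⁻¹) * D j (Mof g c) := by
      rw [hD2 j (c * Rels t) c⁻¹, hD2 j c (Rels t), D_inv D hD2, mul_neg, ← mul_assoc,
        ← map_mul, ← sub_eq_add_neg]
    have key : Φ (D j (Mof g (c * Rels t * c⁻¹)))
        = MonoidAlgebra.of ℤ G (φ c) * Φ (D j (Mof g (Rels t))) := by
      rw [e1, map_sub, map_add, map_mul Φ, map_mul Φ, hΦ, hΦ, hconj1, map_one, one_mul,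
        add_sub_cancel_left]
    rw [key]
    exact I.mul_mem_left _ _ (hI j t)
  | one =>
    rw [D_one D hD2, map_zero]
    exact I.zero_mem
  | mul x y hx hy ihx ihy =>
    rw [hD2 j x y, map_add, map_mul Φ, hΦ]
    exact I.add_mem ihx (I.mul_mem_left _ _ ihy)
  | inv x hx ih =>
    rw [D_inv D hD2, map_neg, map_mul Φ, hΦ]
    exact I.neg_mem (I.mul_mem_left _ _ ih)

theorem sigma_congr
    {G : Type*} [Group G]
    (φ : FreeGroup (Fin g) →* G)
    (D : Fin g → MonoidAlgebra ℤ (FreeGroup (Fin g)) →ₗ[ℤ] MonoidAlgebra ℤ (FreeGroup (Fin g)))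
    (hD2 : ∀ (i : Fin g) (u v : FreeGroup (Fin g)),
      D i (Mof g (u * v)) = D i (Mof g u) + Mof g u * D i (Mof g v))
    (Φ : MonoidAlgebra ℤ (FreeGroup (Fin g)) →+* MonoidAlgebra ℤ G)
    {S : Type*} [Ring S] (σ : MonoidAlgebra ℤ G →+* S)
    (hzero : ∀ r ∈ φ.ker, ∀ i : Fin g, σ (Φ (D i (Mof g r))) = 0)
    (j : Fin g) {u v : FreeGroup (Fin g)} (h : φ u = φ v) :
    σ (Φ (D j (Mof g u))) = σ (Φ (D j (Mof g v))) := by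
  have hv : v = u * (u⁻¹ * v) := by group
  have hk : u⁻¹ * v ∈ φ.ker := by
    rw [MonoidHom.mem_ker, map_mul, map_inv, h, inv_mul_cancel]
  have e : D j (Mof g v) = D j (Mof g u) + Mof g u * D j (Mof g (u⁻¹ * v)) := by
    conv_lhs => rw [hv]
    exact hD2 j u (u⁻¹ * v)
  rw [e, map_add Φ, map_mul Φ, map_add σ, map_mul σ, hzero _ hk j, mul_zero, add_zero]

end LMaux


/-- Lustig–Moriah Nielsen-equivalence criterion: with a presentation
`φ : F(X₁,…,X_g) → G`, Fox derivatives `D i = ∂/∂Xᵢ`, induced ring homomorphism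
`Φ : ℤ[F] → ℤ[G]`, the two-sided ideal `I` generated by the images of the Fox
derivatives of the relators, and a ring homomorphism `σ : ℤ[G] → M_m(R)` vanishing on
`I`: if `w₁,…,w_g ∈ F` are such that the generating system `(φ(w₁),…,φ(w_g))` of `G` is
Nielsen equivalent to `(φ(X₁),…,φ(X_g))`, then the `(gm)×(gm)` matrix whose `(i,j)`-th
`m×m` block is `σ(Φ(∂wᵢ/∂Xⱼ))` has determinant a unit of `R`. -/
theorem det_isUnit_of_nielsen_equivalent
    (g : ℕ) {G : Type*} [Group G]
    (φ : FreeGroup (Fin g) →* G) (hφ : Function.Surjective φ)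
    (Rels : Fin (g - 1) → FreeGroup (Fin g))
    (hker : φ.ker = Subgroup.normalClosure (Set.range Rels))
    -- the Fox derivatives `∂/∂Xᵢ`, as `ℤ`-linear maps on the integral group ring
    (D : Fin g →
      MonoidAlgebra ℤ (FreeGroup (Fin g)) →ₗ[ℤ] MonoidAlgebra ℤ (FreeGroup (Fin g)))
    (hD1 : ∀ i j : Fin g,
      D i (MonoidAlgebra.of ℤ (FreeGroup (Fin g)) (FreeGroup.of j)) =
        if j = i then 1 else 0)
    (hD2 : ∀ (i : Fin g) (u v : FreeGroup (Fin g)),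
      D i (MonoidAlgebra.of ℤ (FreeGroup (Fin g)) (u * v)) =
        D i (MonoidAlgebra.of ℤ (FreeGroup (Fin g)) u) +
          MonoidAlgebra.of ℤ (FreeGroup (Fin g)) u *
            D i (MonoidAlgebra.of ℤ (FreeGroup (Fin g)) v))
    -- the induced ring homomorphism `Φ : ℤ[F] → ℤ[G]`
    (Φ : MonoidAlgebra ℤ (FreeGroup (Fin g)) →+* MonoidAlgebra ℤ G)
    (hΦ : ∀ u : FreeGroup (Fin g),
      Φ (MonoidAlgebra.of ℤ (FreeGroup (Fin g)) u) = MonoidAlgebra.of ℤ G (φ u))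
    -- the two-sided ideal generated by the images of the Fox derivatives of the relators
    (I : TwoSidedIdeal (MonoidAlgebra ℤ G))
    (hI : I = TwoSidedIdeal.span
      {x | ∃ (i : Fin g) (j : Fin (g - 1)),
        x = Φ (D i (MonoidAlgebra.of ℤ (FreeGroup (Fin g)) (Rels j)))})
    -- a representation of `ℤ[G]/I` in `M_m(R)`
    (m : ℕ) {R : Type*} [CommRing R]
    (σ : MonoidAlgebra ℤ G →+* Matrix (Fin m) (Fin m) R)
    (hσ : ∀ x ∈ I, σ x = 0)
    -- a system `(φ(w₁),…,φ(w_g))` Nielsen equivalent to `(φ(X₁),…,φ(X_g))`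
    (w : Fin g → FreeGroup (Fin g))
    (hNielsen : ∃ α : FreeGroup (Fin g) ≃* FreeGroup (Fin g),
      ∀ v : FreeGroup (Fin g),
        FreeGroup.lift (fun i : Fin g => φ (w i)) v = φ (α v)) :
    IsUnit (Matrix.det (Matrix.of fun p q : Fin g × Fin m =>
      σ (Φ (D q.1 (MonoidAlgebra.of ℤ (FreeGroup (Fin g)) (w p.1)))) p.2 q.2)) := by
  
  classical
  obtain ⟨α, hα⟩ := hNielsen
  let β : FreeGroup (Fin g) →* FreeGroup (Fin g) := α.toMonoidHom
  have hIgen : ∀ (i : Fin g) (t : Fin (g - 1)),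
      Φ (D i (LMaux.Mof g (Rels t))) ∈ I := fun i t => by
    rw [hI]; exact TwoSidedIdeal.subset_span ⟨i, t, rfl⟩
  have hmem : ∀ r ∈ φ.ker, ∀ j : Fin g, Φ (D j (LMaux.Mof g r)) ∈ I :=
    fun r hr j => LMaux.ker_fox_mem φ Rels hker D hD2 Φ hΦ I hIgen hr j
  have hzero : ∀ r ∈ φ.ker, ∀ i : Fin g, σ (Φ (D i (LMaux.Mof g r))) = 0 :=
    fun r hr i => hσ _ (hmem r hr i)
  let M : Matrix (Fin g) (Fin g) (MonoidAlgebra ℤ G) :=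
    Matrix.of fun p k => Φ (LMaux.indHom g β (D k (LMaux.Mof g (α.symm (FreeGroup.of p)))))
  let N : Matrix (Fin g) (Fin g) (MonoidAlgebra ℤ G) :=
    Matrix.of fun k j => Φ (D j (LMaux.Mof g (β (FreeGroup.of k))))
  have hMN : M * N = 1 := by
    ext p j
    rw [Matrix.mul_apply, Matrix.one_apply]
    have hcr := LMaux.chain_rule D hD1 hD2 β j (α.symm (FreeGroup.of p))
    have hps : β (α.symm (FreeGroup.of p)) = FreeGroup.of p := α.apply_symm_apply _
    rw [hps] at hcr
    have e2 : Φ (D j (LMaux.Mof g (FreeGroup.of p))) =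
        ∑ k, Φ (LMaux.indHom g β (D k (LMaux.Mof g (α.symm (FreeGroup.of p)))))
          * Φ (D j (LMaux.Mof g (β (FreeGroup.of k)))) := by
      rw [hcr, map_sum]
      exact Finset.sum_congr rfl fun k _ => map_mul Φ _ _
    have e3 : ∑ k, M p k * N k j
        = Φ (D j (LMaux.Mof g (FreeGroup.of p))) := by rw [e2]; rfl
    rw [e3, hD1 j p, apply_ite Φ, map_one, map_zero]
  let τ : Matrix (Fin g) (Fin g) (MonoidAlgebra ℤ G) →+*
      Matrix (Fin g × Fin m) (Fin g × Fin m) R :=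
    (Matrix.compRingEquiv (Fin g) (Fin m) R).toRingHom.comp σ.mapMatrix
  have hτ : τ M * τ N = 1 := by rw [← map_mul, hMN, map_one]
  have hgoal : (Matrix.of fun p q : Fin g × Fin m =>
      σ (Φ (D q.1 (MonoidAlgebra.of ℤ (FreeGroup (Fin g)) (w p.1)))) p.2 q.2) = τ N := by
    ext ⟨p1, p2⟩ ⟨q1, q2⟩
    have hphi : φ (w p1) = φ (β (FreeGroup.of p1)) := by
      have h := hα (FreeGroup.of p1)
      rw [FreeGroup.lift_apply_of] at h
      exact h
    have hcong := LMaux.sigma_congr φ D hD2 Φ σ hzero q1 hphi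
    have hτN : τ N (p1, p2) (q1, q2) = σ (N p1 q1) p2 q2 := by
      simp [τ, Matrix.compRingEquiv, Matrix.compAddEquiv, Matrix.comp]
      rfl
    rw [Matrix.of_apply, hτN]
    exact congrFun (congrFun hcong p2) q2
  rw [hgoal]
  exact Matrix.isUnit_det_of_left_inverse hτ
end
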